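/- Let K be a field of characteristic 2 with a Tits endomorphism θ and let ν be a θ-invariant valuation of K. Then for all a, b in the group S = K × K, ν(R(a·b)) ≥ min{ ν(R(a)), ν(R(b)) }, with the convention ν(0) = ∞. -/

import Mathlib

/-!
For `a = (s, t)` and `b = (u, v)` one has, in characteristic 2,
`R(a·b) = R(a) + R(b) + s v + u t + s^{θ+1} u`, so it suffices to bound the three cross terms.

Put `α = ν(s)`, `β = ν(t)`. The three terms of `R(s, t)` have values `(2+√2)α`, `α+β`
and `√2β`, and the middle one exceeds the smaller of the outer two strictly unless all three
coincide; hence `ν(R(s, t)) ≤ min(ν(s^{θ+2}), ν(t^θ))`. In the coincident case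
`t = w s^{θ+1}` with `ν(w) = 0` and `R(s, t) = s^{θ+2} (1 + w + w^θ)`. If `z = 1 + w + w^θ`
had positive value, so would `z + z^θ = w (1 + w)`, hence `y = 1 + w`, and then
`z = 1 + (y + y^θ)` would have value `ν(1) = 0`.

The cross terms are then controlled by the elementary inequalities
`α + β' ≥ min((2+√2)α, √2β')` and `(1+√2)α + α' ≥ min((2+√2)α, (2+√2)α')`.
-/

/-- Multiplication of an extended real (in `WithTop ℝ`) by a real scalar,
with the convention `c · ∞ = ∞`. -/
noncomputable def smulTop (c : ℝ) (x : WithTop ℝ) : WithTop ℝ :=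
  WithTop.map (fun y => c * y) x

/-- The multiplication `(s,t)·(u,v) = (s+u, t+v+θ(s)u)` on `S = K × K`. -/
def Smul {K : Type*} [Field K] (θ : K →+* K) (a b : K × K) : K × K :=
  (a.1 + b.1, a.2 + b.2 + θ a.1 * b.1)

/-- The norm `R(s,t) = s^{θ+2} + st + θ(t)` of the group `S = K × K`. -/
def Rnorm {K : Type*} [Field K] (θ : K →+* K) (s t : K) : K :=
  θ s * s ^ 2 + s * t + θ t

lemma smulTop_coe (c r : ℝ) : smulTop c r = ↑(c * r) := rfl

@[simp] lemma smulTop_top (c : ℝ) : smulTop c ⊤ = ⊤ := rfl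

lemma smulTop_pos {c : ℝ} (hc : 0 < c) {x : WithTop ℝ} (hx : 0 < x) : 0 < smulTop c x := by
  induction x using WithTop.recTopCoe with
  | top => simp
  | coe a => exact WithTop.coe_pos.2 (mul_pos hc (WithTop.coe_pos.1 hx))

lemma eq_zero_of_smulTop_eq_zero {c : ℝ} (hc : c ≠ 0) {x : WithTop ℝ} (h : smulTop c x = 0) :
    x = 0 := by
  induction x using WithTop.recTopCoe with
  | top => simp at h
  | coe a =>
    rw [smulTop_coe, WithTop.coe_eq_zero, mul_eq_zero] at h
    exact WithTop.coe_eq_zero.2 (h.resolve_left hc)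

lemma sqrt_two_mul_sqrt_two_mul (a : ℝ) : √2 * (√2 * a) = 2 * a := by
  rw [← mul_assoc, Real.mul_self_sqrt zero_le_two]

lemma min_sqrt_two_mul_lt_add_of_ne {a b : ℝ} (h : √2 * a + (a + a) ≠ √2 * b) :
    min (√2 * a + (a + a)) (√2 * b) < a + b := by
  rcases h.lt_or_gt with h | h
  · refine (min_le_left _ _).trans_lt ?_
    by_contra! hn
    nlinarith [mul_le_mul_of_nonneg_left hn (Real.sqrt_nonneg 2), sqrt_two_mul_sqrt_two_mul a]
  · refine (min_le_right _ _).trans_lt ?_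
    by_contra! hn
    have h2 : 0 ≤ √2 + 2 := by positivity
    nlinarith [mul_le_mul_of_nonneg_left hn h2, sqrt_two_mul_sqrt_two_mul a,
      sqrt_two_mul_sqrt_two_mul b]

lemma min_sqrt_two_mul_le_add (a b : ℝ) : min (√2 * a + (a + a)) (√2 * b) ≤ a + b := by
  by_cases h : √2 * a + (a + a) = √2 * b
  · refine (min_le_left _ _).trans (le_of_eq ?_)
    have h' := congrArg (√2 * ·) h
    simp only [mul_add, sqrt_two_mul_sqrt_two_mul] at h'
    linarith
  · exact (min_sqrt_two_mul_lt_add_of_ne h).le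

lemma min_sqrt_two_mul_le_add_add (a b : ℝ) :
    min (√2 * a + (a + a)) (√2 * b + (b + b)) ≤ √2 * a + a + b := by
  have hgt : 1 < √2 := Real.one_lt_sqrt_two
  rcases le_total a b with h | h
  · exact (min_le_left _ _).trans (by linarith)
  · exact (min_le_right _ _).trans (by nlinarith)

namespace WithTop

lemma min_sqrt_two_mul_lt_add_of_ne {x y : WithTop ℝ}
    (h : smulTop √2 x + (x + x) ≠ smulTop √2 y) :
    min (smulTop √2 x + (x + x)) (smulTop √2 y) < x + y := by
  induction x using recTopCoe <;> induction y using recTopCoe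
  · simp at h
  all_goals simp only [smulTop_top, smulTop_coe, top_add, add_top, min_top_left, min_top_right]
  iterate 2 · norm_cast; exact coe_lt_top _
  · simp only [smulTop_coe] at h ⊢
    norm_cast at h ⊢
    exact _root_.min_sqrt_two_mul_lt_add_of_ne h

lemma min_sqrt_two_mul_le_add (x y : WithTop ℝ) :
    min (smulTop √2 x + (x + x)) (smulTop √2 y) ≤ x + y := by
  induction x using recTopCoe <;> induction y using recTopCoe
  iterate 3 · simp
  · simp only [smulTop_coe]
    norm_cast
    exact _root_.min_sqrt_two_mul_le_add _ _

lemma min_sqrt_two_mul_le_add_add (x y : WithTop ℝ) :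
    min (smulTop √2 x + (x + x)) (smulTop √2 y + (y + y)) ≤ smulTop √2 x + x + y := by
  induction x using recTopCoe <;> induction y using recTopCoe
  iterate 3 · simp
  · simp only [smulTop_coe]
    norm_cast
    exact _root_.min_sqrt_two_mul_le_add_add _ _

end WithTop

section RnormIdentities

variable {K : Type*} [Field K] {θ : K →+* K}

lemma Rnorm_mul_theta_mul (hθ : ∀ x : K, θ (θ x) = x ^ 2) (s w : K) :
    Rnorm θ s (w * (θ s * s)) = θ s * s ^ 2 * (1 + w + θ w) := by
  rw [Rnorm, map_mul, map_mul, hθ]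
  ring

lemma Rnorm_Smul [CharP K 2] (hθ : ∀ x : K, θ (θ x) = x ^ 2) (a b : K × K) :
    Rnorm θ (Smul θ a b).1 (Smul θ a b).2 =
      Rnorm θ a.1 a.2 + Rnorm θ b.1 b.2 + (a.1 * b.2 + b.1 * a.2 + θ a.1 * a.1 * b.1) := by
  simp only [Rnorm, Smul, map_add, map_mul, hθ]
  linear_combination (θ a.1 * a.1 * b.1 + θ a.1 * b.1 ^ 2 + θ b.1 * a.1 * b.1 + θ b.1 * a.1 ^ 2)
    * CharTwo.two_eq_zero (R := K)

lemma one_add_add_theta_add_theta [CharP K 2] (hθ : ∀ x : K, θ (θ x) = x ^ 2) (w : K) :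
    (1 + w + θ w) + θ (1 + w + θ w) = w * (1 + w) := by
  simp only [map_add, map_one, hθ]
  linear_combination (1 + θ w) * CharTwo.two_eq_zero (R := K)

end RnormIdentities

namespace AddValuation

variable {K : Type*} [Field K] {θ : K →+* K} {v : AddValuation K (WithTop ℝ)}

lemma map_theta_mul_sq (hv : ∀ x, v (θ x) = smulTop √2 (v x)) (s : K) :
    v (θ s * s ^ 2) = smulTop √2 (v s) + (v s + v s) := by
  rw [v.map_mul, pow_two, v.map_mul, hv]

lemma map_theta_pos (hv : ∀ x, v (θ x) = smulTop √2 (v x)) {x : K} (hx : 0 < v x) :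
    0 < v (θ x) :=
  hv x ▸ smulTop_pos (by positivity) hx

lemma map_add_theta_pos (hv : ∀ x, v (θ x) = smulTop √2 (v x)) {x : K}
    (hx : 0 < v x) : 0 < v (x + θ x) :=
  (lt_min hx (v.map_theta_pos hv hx)).trans_le (v.map_add _ _)

lemma map_one_add_add_theta_nonpos [CharP K 2] (hθ : ∀ x : K, θ (θ x) = x ^ 2)
    (hv : ∀ x, v (θ x) = smulTop √2 (v x)) {w : K} (hw : v w = 0) :
    v (1 + w + θ w) ≤ 0 := by
  by_contra! hz
  have hy : 0 < v (1 + w) := by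
    simpa only [one_add_add_theta_add_theta hθ, v.map_mul, hw, zero_add]
      using v.map_add_theta_pos hv hz
  have hz' : 1 + w + θ w = 1 + ((1 + w) + θ (1 + w)) := by
    rw [_root_.map_add, _root_.map_one]
    linear_combination -CharTwo.two_eq_zero (R := K)
  rw [hz', v.map_add_eq_of_lt_left (v.map_one ▸ v.map_add_theta_pos hv hy), v.map_one] at hz
  exact lt_irrefl _ hz

lemma map_Rnorm_le [CharP K 2] (hθ : ∀ x : K, θ (θ x) = x ^ 2)
    (hv : ∀ x, v (θ x) = smulTop √2 (v x)) (s t : K) :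
    v (Rnorm θ s t) ≤ min (v (θ s * s ^ 2)) (v (θ t)) := by
  by_cases heq : v (θ s * s ^ 2) = v (θ t)
  · rw [heq, min_self]
    by_cases htop : v (θ t) = ⊤
    · exact htop ▸ le_top
    have hs : s ≠ 0 := by
      rintro rfl
      simp only [_root_.map_zero, zero_mul, map_zero] at heq
      exact htop heq.symm
    obtain ⟨w, rfl⟩ : ∃ w, t = w * (θ s * s) :=
      ⟨t / (θ s * s), (div_mul_cancel₀ _ (mul_ne_zero ((map_ne_zero θ).2 hs) hs)).symm⟩
    have hw : v w = 0 := by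
      have key : v (θ (w * (θ s * s))) = v (θ w) + v (θ s * s ^ 2) := by
        rw [_root_.map_mul θ, v.map_mul, _root_.map_mul θ, hθ, mul_comm (s ^ 2)]
      rw [heq] at key
      exact eq_zero_of_smulTop_eq_zero (by positivity)
        (hv w ▸ WithTop.add_right_cancel htop (key.symm.trans (zero_add _).symm))
    rw [Rnorm_mul_theta_mul hθ, v.map_mul, ← heq]
    exact add_le_of_nonpos_right (v.map_one_add_add_theta_nonpos hθ hv hw)
  · have hR : Rnorm θ s t = (θ s * s ^ 2 + θ t) + s * t := by rw [Rnorm]; ring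
    have hmid : v (θ s * s ^ 2 + θ t) < v (s * t) := by
      rw [v.map_add_of_distinct_val heq, v.map_theta_mul_sq hv, hv, v.map_mul]
      rw [v.map_theta_mul_sq hv, hv] at heq
      exact WithTop.min_sqrt_two_mul_lt_add_of_ne heq
    rw [hR, v.map_add_eq_of_lt_left hmid, v.map_add_of_distinct_val heq]

lemma min_le_map_mul (hv : ∀ x, v (θ x) = smulTop √2 (v x)) (s t : K) :
    min (v (θ s * s ^ 2)) (v (θ t)) ≤ v (s * t) := by
  rw [v.map_theta_mul_sq hv, hv, v.map_mul]
  exact WithTop.min_sqrt_two_mul_le_add _ _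

lemma min_le_map_theta_mul_mul (hv : ∀ x, v (θ x) = smulTop √2 (v x)) (s u : K) :
    min (v (θ s * s ^ 2)) (v (θ u * u ^ 2)) ≤ v (θ s * s * u) := by
  rw [v.map_theta_mul_sq hv, v.map_theta_mul_sq hv, v.map_mul, v.map_mul, hv]
  exact WithTop.min_sqrt_two_mul_le_add_add _ _

theorem min_le_map_Rnorm_Smul [CharP K 2] (hθ : ∀ x : K, θ (θ x) = x ^ 2)
    (hv : ∀ x, v (θ x) = smulTop √2 (v x)) (a b : K × K) :
    min (v (Rnorm θ a.1 a.2)) (v (Rnorm θ b.1 b.2)) ≤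
      v (Rnorm θ (Smul θ a b).1 (Smul θ a b).2) := by
  obtain ⟨s, t⟩ := a
  obtain ⟨u, w⟩ := b
  have ha := v.map_Rnorm_le hθ hv s t
  have hb := v.map_Rnorm_le hθ hv u w
  rw [Rnorm_Smul hθ]
  refine v.map_le_add (v.map_le_add (min_le_left _ _) (min_le_right _ _))
    (v.map_le_add (v.map_le_add ?_ ?_) ?_)
  · exact (min_le_min (ha.trans (min_le_left _ _)) (hb.trans (min_le_right _ _))).trans
      (v.min_le_map_mul hv s w)
  · exact (min_comm _ _).trans_le <| (min_le_min (hb.trans (min_le_left _ _))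
      (ha.trans (min_le_right _ _))).trans (v.min_le_map_mul hv u t)
  · exact (min_le_min (ha.trans (min_le_left _ _)) (hb.trans (min_le_left _ _))).trans
      (v.min_le_map_theta_mul_mul hv s u)

end AddValuation

theorem stmt_19_general {K : Type*} [Field K] [CharP K 2]
    (θ : K →+* K) (hθ : ∀ x : K, θ (θ x) = x ^ 2)
    (ν : K → WithTop ℝ)
    (hν0 : ∀ x : K, ν x = ⊤ ↔ x = 0)
    (hmul : ∀ x y : K, ν (x * y) = ν x + ν y)
    (hadd : ∀ x y : K, min (ν x) (ν y) ≤ ν (x + y))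
    (hinv : ∀ x : K, x ≠ 0 → ν (θ x) = smulTop (Real.sqrt 2) (ν x))
    (a b : K × K) :
    min (ν (Rnorm θ a.1 a.2)) (ν (Rnorm θ b.1 b.2))
      ≤ ν (Rnorm θ (Smul θ a b).1 (Smul θ a b).2) := by
  have hν1 : ν 1 = 0 :=
    WithTop.add_right_cancel (fun h => one_ne_zero ((hν0 1).1 h))
      (by rw [zero_add, ← hmul, one_mul])
  let v := AddValuation.of ν ((hν0 0).2 rfl) hν1 hadd hmul
  have hv : ∀ x, v (θ x) = smulTop √2 (v x) := by
    intro x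
    rcases eq_or_ne x 0 with rfl | hx
    · simp [v]
    · exact hinv x hx
  exact v.min_le_map_Rnorm_Smul hθ hv a b

/-- Let `K` be a field of characteristic 2 with a Tits endomorphism `θ` and `ν`
a `θ`-invariant valuation of `K`. Then for all `a, b` in the group `S = K × K`,
`ν(R(a·b)) ≥ min{ν(R(a)), ν(R(b))}` (convention `ν(0) = ∞`). -/
theorem stmt_19 {K : Type*} [Field K] [CharP K 2]
    (θ : K →+* K) (hθ : ∀ x : K, θ (θ x) = x ^ 2)
    (ν : K → WithTop ℝ)
    (hν0 : ∀ x : K, ν x = ⊤ ↔ x = 0)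
    (hmul : ∀ x y : K, ν (x * y) = ν x + ν y)
    (hadd : ∀ x y : K, min (ν x) (ν y) ≤ ν (x + y))
    (hnt : ∃ x : K, x ≠ 0 ∧ ν x ≠ 0)
    (hinv : ∀ x : K, x ≠ 0 → ν (θ x) = smulTop (Real.sqrt 2) (ν x))
    (a b : K × K) :
    min (ν (Rnorm θ a.1 a.2)) (ν (Rnorm θ b.1 b.2))
      ≤ ν (Rnorm θ (Smul θ a b).1 (Smul θ a b).2) :=
  stmt_19_general θ hθ ν hν0 hmul hadd hinv a b
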